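/- Define d_λ(q₁,q₂) = inf over γ ∈ Γ of ( ‖(q₁*γ₁) − ((q₂*γ₂)*γ)‖² + λ‖√(γ') − 1‖² )^{1/2}, where γ₁, γ₂ are fixed warpings depending on (q₁,τ⁽¹⁾) and (q₂,τ⁽²⁾). Then d_λ is symmetric: d_λ(q₁,q₂) = d_λ(q₂,q₁). -/

import Mathlib

/-! Inversion `γ ↦ γ⁻¹` is a bijection of the warping group, the action is an L²-isometry, and
`(a * γ⁻¹) * γ = a`. Hence `‖b − a * γ⁻¹‖ = ‖(b − a * γ⁻¹) * γ‖ = ‖b * γ − a‖`; with `a = b = 1`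
this gives `‖1 * γ⁻¹ − 1‖ = ‖1 * γ − 1‖` for the penalty, so the cost of `γ` for `(a, b)` equals
the cost of `γ⁻¹` for `(b, a)` and both infima run over the same set of values.

Since warpings are C¹ on all of `ℝ`, the inverse is built from the extension
`x ↦ γ 0 + ∫₀ˣ max (γ' t) c` of `γ|[0,1]`, with `c = min γ'` on `[0,1]`: its derivative is
continuous and at least `c > 0`, so it is an order isomorphism of `ℝ` with C¹ inverse. -/

open MeasureTheory Set intervalIntegral

/-- Warping action on SRVFs: `(q*γ)(t) = q(γ(t))·√(γ'(t))`. -/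
noncomputable def warp (q γ : ℝ → ℝ) (t : ℝ) : ℝ := q (γ t) * Real.sqrt (deriv γ t)

/-- `γ` is an orientation-preserving C¹ diffeomorphism of `[0,1]` fixing the endpoints,
with strictly positive derivative on `[0,1]`. -/
def IsWarp (γ : ℝ → ℝ) : Prop :=
  ContDiff ℝ 1 γ ∧ γ 0 = 0 ∧ γ 1 = 1 ∧ (∀ t ∈ Set.Icc (0:ℝ) 1, 0 < deriv γ t) ∧
    Set.MapsTo γ (Set.Icc (0:ℝ) 1) (Set.Icc (0:ℝ) 1)

/-- Squared L² norm on `[0,1]`. -/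
noncomputable def L2sq (g : ℝ → ℝ) : ℝ := ∫ t in (0:ℝ)..1, g t ^ 2

/-- L² norm on `[0,1]`. -/
noncomputable def L2norm (g : ℝ → ℝ) : ℝ := Real.sqrt (L2sq g)

/-- Penalty term `‖√(γ') − 1‖²`. -/
noncomputable def penSq (γ : ℝ → ℝ) : ℝ := L2sq (fun t => Real.sqrt (deriv γ t) - 1)

/-- Soft-alignment cost for a given warping `γ`. -/
noncomputable def cost (lam : ℝ) (a b γ : ℝ → ℝ) : ℝ :=
  L2sq (fun t => a t - warp b γ t) + lam * penSq γ

/-- Soft landmark alignment pseudometric `d_λ` between (hard-registered) SRVFs `a`, `b`. -/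
noncomputable def dsoft (lam : ℝ) (a b : ℝ → ℝ) : ℝ :=
  Real.sqrt (sInf ((fun γ => cost lam a b γ) '' {γ | IsWarp γ}))

open Filter

theorem surjective_of_hasDerivAt_of_le {f f' : ℝ → ℝ} {c : ℝ} (hc : 0 < c)
    (hf : ∀ x, HasDerivAt f (f' x) x) (hf' : ∀ x, c ≤ f' x) : Function.Surjective f := by
  have hslope : ∀ x, HasDerivAt (fun x => f x - c * x) (f' x - c) x := fun x => by
    simpa using (hf x).fun_sub ((hasDerivAt_id x).const_mul c)
  have hmono : Monotone fun x => f x - c * x :=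
    monotone_of_deriv_nonneg (fun x => (hslope x).differentiableAt)
      fun x => by rw [(hslope x).deriv]; linarith [hf' x]
  refine Continuous.surjective (continuous_iff_continuousAt.2 fun x => (hf x).continuousAt) ?_ ?_
  · refine tendsto_atTop_mono' atTop ?_
      (tendsto_atTop_add_const_left _ (f 0) (tendsto_id.const_mul_atTop hc))
    filter_upwards [eventually_ge_atTop 0] with x hx
    have hx0 := hmono hx
    simp only [mul_zero, sub_zero] at hx0
    simp only [id]
    linarith
  · refine tendsto_atBot_mono' atBot ?_
      (tendsto_atBot_add_const_left _ (f 0) (tendsto_id.const_mul_atBot hc))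
    filter_upwards [eventually_le_atBot 0] with x hx
    have hx0 := hmono hx
    simp only [mul_zero, sub_zero] at hx0
    simp only [id]
    linarith

theorem exists_orderIso_hasDerivAt_symm {f f' : ℝ → ℝ} {c : ℝ} (hc : 0 < c)
    (hf : ∀ x, HasDerivAt f (f' x) x) (hf'c : Continuous f') (hf' : ∀ x, c ≤ f' x) :
    ∃ e : ℝ ≃o ℝ, ⇑e = f ∧ ContDiff ℝ 1 e.symm ∧
      ∀ y, HasDerivAt e.symm (f' (e.symm y))⁻¹ y := by
  have hne : ∀ x, f' x ≠ 0 := fun x => (hc.trans_le (hf' x)).ne'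
  have hmono : StrictMono f :=
    strictMono_of_deriv_pos fun x => (hf x).deriv ▸ hc.trans_le (hf' x)
  let e := hmono.orderIsoOfSurjective f (surjective_of_hasDerivAt_of_le hc hf hf')
  have hfC1 : ContDiff ℝ 1 f := by
    rw [contDiff_one_iff_deriv]
    exact ⟨fun x => (hf x).differentiableAt, by rwa [show deriv f = f' from funext fun x => (hf x).deriv]⟩
  refine ⟨e, rfl, e.toHomeomorph.contDiff_symm_deriv hne hf hfC1, fun y => ?_⟩
  refine HasDerivAt.of_local_left_inverse e.symm.continuous.continuousAt (hf _) (hne _) ?_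
  exact Eventually.of_forall fun z => e.apply_symm_apply z

namespace IsWarp

variable {γ : ℝ → ℝ}

theorem continuous_deriv (h : IsWarp γ) : Continuous (deriv γ) :=
  (contDiff_one_iff_deriv.mp h.1).2

theorem exists_pos_le_deriv (h : IsWarp γ) : ∃ c > 0, ∀ t ∈ Icc (0:ℝ) 1, c ≤ deriv γ t := by
  obtain ⟨t₀, ht₀, hmin⟩ := isCompact_Icc.exists_isMinOn (nonempty_Icc.2 zero_le_one)
    h.continuous_deriv.continuousOn
  exact ⟨deriv γ t₀, h.2.2.2.1 t₀ ht₀, fun t ht => hmin ht⟩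

theorem exists_extension (h : IsWarp γ) :
    ∃ f f' : ℝ → ℝ, ∃ c > 0, (∀ x, HasDerivAt f (f' x) x) ∧ Continuous f' ∧ (∀ x, c ≤ f' x) ∧
      EqOn f γ (Icc 0 1) ∧ EqOn f' (deriv γ) (Icc 0 1) := by
  obtain ⟨c, hc, hle⟩ := h.exists_pos_le_deriv
  have hφ : Continuous fun t => max (deriv γ t) c := h.continuous_deriv.max continuous_const
  refine ⟨fun x => γ 0 + ∫ t in (0:ℝ)..x, max (deriv γ t) c, fun t => max (deriv γ t) c, c, hc,
    fun x => (hφ.integral_hasStrictDerivAt 0 x).hasDerivAt.const_add _, hφ,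
    fun x => le_max_right _ _, fun x hx => ?_, fun t ht => max_eq_left (hle t ht)⟩
  have hsub : uIcc 0 x ⊆ Icc 0 1 := by
    rw [uIcc_of_le hx.1]; exact Icc_subset_Icc_right hx.2
  have hdiff : Differentiable ℝ γ := h.1.differentiable one_ne_zero
  simp only
  rw [integral_congr fun t ht => max_eq_left (hle t (hsub ht)),
    integral_deriv_eq_sub (fun t _ => hdiff t) (h.continuous_deriv.intervalIntegrable 0 x)]
  ring

theorem exists_leftInverse (h : IsWarp γ) :
    ∃ δ, IsWarp δ ∧ ∀ t ∈ Icc (0:ℝ) 1, δ (γ t) = t ∧ deriv δ (γ t) = (deriv γ t)⁻¹ := by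
  obtain ⟨f, f', c, hc, hf, hf'c, hf', hfγ, hf'γ⟩ := h.exists_extension
  obtain ⟨e, rfl, hC1, hderiv⟩ := exists_orderIso_hasDerivAt_symm hc hf hf'c hf'
  have h0 : e.symm 0 = 0 := by rw [e.symm_apply_eq, hfγ ⟨le_rfl, zero_le_one⟩, h.2.1]
  have h1 : e.symm 1 = 1 := by rw [e.symm_apply_eq, hfγ ⟨zero_le_one, le_rfl⟩, h.2.2.1]
  have hleft : ∀ t ∈ Icc (0:ℝ) 1, e.symm (γ t) = t := fun t ht => by
    rw [← hfγ ht, e.symm_apply_apply]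
  refine ⟨e.symm, ⟨hC1, h0, h1, fun y _ => ?_, fun y hy => ?_⟩, fun t ht => ⟨hleft t ht, ?_⟩⟩
  · rw [(hderiv y).deriv]; exact inv_pos.2 (hc.trans_le (hf' _))
  · exact ⟨h0 ▸ e.symm.monotone hy.1, h1 ▸ e.symm.monotone hy.2⟩
  · rw [(hderiv _).deriv, hleft t ht, hf'γ ht]

theorem integral_comp_mul_deriv (h : IsWarp γ) (F : ℝ → ℝ) :
    ∫ t in (0:ℝ)..1, F (γ t) * deriv γ t = ∫ x in (0:ℝ)..1, F x := by
  have hdiff : Differentiable ℝ γ := h.1.differentiable one_ne_zero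
  have hsubst := integral_comp_mul_deriv_of_deriv_nonneg (a := 0) (b := 1) (g := F) h.1.continuous.continuousOn
    (fun x _ => (hdiff x).hasDerivAt)
    (fun x hx => (h.2.2.2.1 x (Ioo_subset_Icc_self (by simpa using hx))).le)
  rwa [h.2.1, h.2.2.1] at hsubst

end IsWarp

theorem L2sq_congr {f g : ℝ → ℝ} (h : EqOn f g (Icc 0 1)) : L2sq f = L2sq g :=
  integral_congr fun t ht => by
    rw [uIcc_of_le zero_le_one] at ht
    simp only [h ht]

theorem L2sq_sub_comm (f g : ℝ → ℝ) : L2sq (fun t => f t - g t) = L2sq (fun t => g t - f t) := by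
  simp only [L2sq, ← neg_sub (g _), neg_sq]

theorem IsWarp.L2sq_warp {γ : ℝ → ℝ} (h : IsWarp γ) (f : ℝ → ℝ) : L2sq (warp f γ) = L2sq f := by
  rw [L2sq, L2sq, ← h.integral_comp_mul_deriv (fun x => f x ^ 2)]
  refine integral_congr fun t ht => ?_
  rw [uIcc_of_le zero_le_one] at ht
  simp only [warp, mul_pow, Real.sq_sqrt (h.2.2.2.1 t ht).le]

theorem warp_warp_apply_of_inv {γ δ : ℝ → ℝ} {t : ℝ} (hγ : 0 < deriv γ t)
    (hδ : δ (γ t) = t ∧ deriv δ (γ t) = (deriv γ t)⁻¹) (f : ℝ → ℝ) :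
    warp (warp f δ) γ t = f t := by
  rw [warp, warp, hδ.1, hδ.2, mul_assoc, ← Real.sqrt_mul (inv_nonneg.2 hγ.le),
    inv_mul_cancel₀ hγ.ne', Real.sqrt_one, mul_one]

theorem IsWarp.L2sq_sub_warp_of_inv {γ δ : ℝ → ℝ} (h : IsWarp γ)
    (hδ : ∀ t ∈ Icc (0:ℝ) 1, δ (γ t) = t ∧ deriv δ (γ t) = (deriv γ t)⁻¹) (a b : ℝ → ℝ) :
    L2sq (fun t => b t - warp a δ t) = L2sq (fun t => a t - warp b γ t) := calc
  _ = L2sq (warp (fun t => b t - warp a δ t) γ) := (h.L2sq_warp _).symm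
  _ = L2sq (fun t => warp b γ t - a t) := L2sq_congr fun t ht => by
    rw [← warp_warp_apply_of_inv (h.2.2.2.1 t ht) (hδ t ht) a]
    simp only [warp]
    ring
  _ = _ := L2sq_sub_comm _ _

theorem penSq_eq_L2sq_sub_warp (γ : ℝ → ℝ) :
    penSq γ = L2sq (fun t => 1 - warp (fun _ => 1) γ t) := by
  rw [penSq, L2sq_sub_comm]
  simp only [warp, one_mul]

theorem IsWarp.cost_eq_of_inv {γ δ : ℝ → ℝ} (h : IsWarp γ)
    (hδ : ∀ t ∈ Icc (0:ℝ) 1, δ (γ t) = t ∧ deriv δ (γ t) = (deriv γ t)⁻¹) (lam : ℝ)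
    (a b : ℝ → ℝ) : cost lam b a δ = cost lam a b γ := by
  rw [cost, cost, penSq_eq_L2sq_sub_warp, penSq_eq_L2sq_sub_warp, h.L2sq_sub_warp_of_inv hδ,
    h.L2sq_sub_warp_of_inv hδ]

theorem image_cost_subset (lam : ℝ) (a b : ℝ → ℝ) :
    (fun γ => cost lam a b γ) '' {γ | IsWarp γ} ⊆ (fun γ => cost lam b a γ) '' {γ | IsWarp γ} := by
  rintro _ ⟨γ, hγ, rfl⟩
  obtain ⟨δ, hδ, hinv⟩ := hγ.exists_leftInverse
  exact ⟨δ, hδ, hγ.cost_eq_of_inv hinv lam a b⟩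

theorem dsoft_comm (lam : ℝ) (a b : ℝ → ℝ) : dsoft lam a b = dsoft lam b a := by
  rw [dsoft, dsoft, (image_cost_subset lam a b).antisymm (image_cost_subset lam b a)]

theorem stmt6_general (lam : ℝ) (q₁ q₂ γ₁ γ₂ : ℝ → ℝ) :
    dsoft lam (warp q₁ γ₁) (warp q₂ γ₂) = dsoft lam (warp q₂ γ₂) (warp q₁ γ₁) :=
  dsoft_comm _ _ _

/-- Symmetry of the soft landmark pseudometric `d_λ`. -/
theorem stmt6 (lam : ℝ) (hlam : 0 ≤ lam) (q₁ q₂ γ₁ γ₂ : ℝ → ℝ)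
    (h₁ : IsWarp γ₁) (h₂ : IsWarp γ₂) :
    dsoft lam (warp q₁ γ₁) (warp q₂ γ₂) = dsoft lam (warp q₂ γ₂) (warp q₁ γ₁) :=
  stmt6_general lam q₁ q₂ γ₁ γ₂
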